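/- For a profile φ of length n ≥ 2k log k, any PML distribution p_φ constrained to have all nonzero probabilities at least 1/k satisfies S(p_φ) = Distinct(φ), provided the empirical distribution of some sequence generating φ also has its nonzero probabilities at least 1/k (so that P(p_φ, φ) > 0). -/

import Mathlib

open Finset
open scoped BigOperators Classical

namespace PML

noncomputable section

variable {D : Type*} [Fintype D] [DecidableEq D]

/-- `p` is a probability distribution on the finite domain `D`. -/
def IsDist (p : D → ℝ) : Prop := (∀ x, 0 ≤ p x) ∧ ∑ x, p x = 1

/-- Probability of observing the sequence `y` of `n` i.i.d. samples from `p`. -/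
def seqProb (n : ℕ) (p : D → ℝ) (y : Fin n → D) : ℝ := ∏ i, p (y i)

/-- Probability of an event over sequences of `n` i.i.d. samples from `p`. -/
def prEvent (n : ℕ) (p : D → ℝ) (P : (Fin n → D) → Prop) : ℝ :=
  ∑ y : Fin n → D, if P y then seqProb n p y else 0

/-- Frequency (multiplicity) of symbol `x` in the sequence `y`. -/
def freq (n : ℕ) (y : Fin n → D) (x : D) : ℕ :=
  (Finset.univ.filter (fun i => y i = x)).card

/-- The `S`-pseudo profile of the sequence `y`: the number of elements of `S`
with frequency `j`. -/
def profS (n : ℕ) (S : Finset D) (y : Fin n → D) : ℕ → ℕ :=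
  fun j => (S.filter (fun x => freq n y x = j)).card

/-- Probability under `p` of observing the `S`-pseudo profile `φ` (on positive
frequencies). -/
def profProb (n : ℕ) (p : D → ℝ) (S : Finset D) (φ : ℕ → ℕ) : ℝ :=
  ∑ y : Fin n → D, if (∀ j, 1 ≤ j → profS n S y j = φ j) then seqProb n p y else 0

/-- The set of distinct (positive) frequencies appearing in a profile `φ`. -/
def Freqs (φ : ℕ → ℕ) : Set ℕ := {j | 1 ≤ j ∧ φ j ≠ 0}

def Distinct (n : ℕ) (φ : ℕ → ℕ) : ℕ := ∑ j ∈ Finset.Icc 1 n, φ j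

def suppF (p : D → ℝ) : Finset D := Finset.univ.filter (fun x => p x ≠ 0)

/-- The support constraint: `p` is a distribution with every nonzero
probability at least `1/k`. -/
def Constr (k : ℕ) (p : D → ℝ) : Prop :=
  IsDist p ∧ ∀ x, p x ≠ 0 → 1 / (k : ℝ) ≤ p x

end

/-! A PML distribution gives `φ` positive probability, since the empirical distribution of `y`
already does; hence its support contains the `Distinct φ` symbols of some sequence with profile `φ`.
If the support `S` had `m ≥ 1` further symbols, split `P(p, φ)` according to the set `T` of observed
symbols, `|T| = Distinct φ`. Conditioning `p` on `T` is again feasible, and it rescales the part of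
`P(p, φ)` carried by `T` by `p(T)⁻ⁿ ≥ (1 - m/k)⁻ⁿ`. By maximality,
`P(p, φ) ≤ C(|S|, |T|) (1 - m/k)ⁿ P(p, φ) ≤ kᵐ k⁻²ᵐ P(p, φ) < P(p, φ)` once `n ≥ 2k log k`. -/

lemma one_sub_div_pow_le_inv_pow {k n m : ℕ} (hk : 0 < k) (hmk : m ≤ k)
    (hn : 2 * (k : ℝ) * Real.log k ≤ n) :
    (1 - (m : ℝ) / k) ^ n ≤ ((k : ℝ) ^ (2 * m))⁻¹ := by
  have hkR : (0 : ℝ) < k := Nat.cast_pos.2 hk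
  have hexp : Real.exp (-(2 * m * Real.log k)) = ((k : ℝ) ^ (2 * m))⁻¹ := by
    rw [Real.exp_neg, ← Nat.cast_ofNat, ← Nat.cast_mul, Real.exp_nat_mul, Real.exp_log hkR]
  calc (1 - (m : ℝ) / k) ^ n ≤ Real.exp (-((m : ℝ) / k)) ^ n :=
        pow_le_pow_left₀ (sub_nonneg.2 ((div_le_one hkR).2 (by exact_mod_cast hmk)))
          (Real.one_sub_le_exp_neg _) n
    _ = Real.exp (-(n * ((m : ℝ) / k))) := by rw [← Real.exp_nat_mul, mul_neg]
    _ ≤ Real.exp (-(2 * m * Real.log k)) := by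
        refine Real.exp_le_exp.2 (neg_le_neg ?_)
        calc 2 * m * Real.log k = 2 * k * Real.log k * (m / k) := by field_simp
          _ ≤ n * (m / k) := by gcongr
    _ = ((k : ℝ) ^ (2 * m))⁻¹ := hexp

lemma choose_mul_one_sub_div_pow_lt_one {k n s d : ℕ} (hk : 2 ≤ k)
    (hn : 2 * (k : ℝ) * Real.log k ≤ n) (hsk : s ≤ k) (hds : d < s) :
    (s.choose d : ℝ) * (1 - ((s - d : ℕ) : ℝ) / k) ^ n < 1 := by
  have hchoose : (s.choose d : ℝ) ≤ (k : ℝ) ^ (s - d) := by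
    rw [← Nat.choose_symm hds.le]
    exact_mod_cast (Nat.choose_le_pow s _).trans (Nat.pow_le_pow_left hsk _)
  have hk0 : (0 : ℝ) < k := by exact_mod_cast (by omega : 0 < k)
  have hmk : s - d ≤ k := by omega
  have hkm : 1 < (k : ℝ) ^ (s - d) :=
    one_lt_pow₀ (by exact_mod_cast hk) (by omega)
  calc (s.choose d : ℝ) * (1 - ((s - d : ℕ) : ℝ) / k) ^ n
      ≤ (k : ℝ) ^ (s - d) * ((k : ℝ) ^ (2 * (s - d)))⁻¹ :=
        mul_le_mul hchoose (one_sub_div_pow_le_inv_pow (by omega) (by omega) hn)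
          (pow_nonneg (sub_nonneg.2 ((div_le_one hk0).2 (by exact_mod_cast hmk))) n)
          (by positivity)
    _ = ((k : ℝ) ^ (s - d))⁻¹ := by
        rw [two_mul, pow_add, mul_inv, ← mul_assoc, mul_inv_cancel₀ (by positivity), one_mul]
    _ < 1 := inv_lt_one_of_one_lt₀ hkm

variable {D : Type*}

lemma seqProb_nonneg {n : ℕ} {p : D → ℝ} (hp : ∀ x, 0 ≤ p x) (z : Fin n → D) :
    0 ≤ seqProb n p z :=
  prod_nonneg fun i _ => hp (z i)

section

variable [DecidableEq D]

lemma freq_ne_zero_iff {n : ℕ} {z : Fin n → D} {x : D} :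
    freq n z x ≠ 0 ↔ x ∈ univ.image z := by
  simp [freq, filter_eq_empty_iff]

noncomputable def condDist (p : D → ℝ) (T : Finset D) (x : D) : ℝ :=
  if x ∈ T then p x / ∑ y ∈ T, p y else 0

lemma seqProb_eq_pow_mul_condDist {n : ℕ} {p : D → ℝ} {T : Finset D} {z : Fin n → D}
    (hz : univ.image z ⊆ T) (ht : ∑ x ∈ T, p x ≠ 0) :
    seqProb n p z = (∑ x ∈ T, p x) ^ n * seqProb n (condDist p T) z := by
  rw [seqProb, seqProb, ← Fin.prod_const, ← prod_mul_distrib]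
  refine prod_congr rfl fun i _ => ?_
  rw [condDist, if_pos (hz (mem_image_of_mem z (mem_univ i))), mul_div_cancel₀ _ ht]

noncomputable def empirical (n : ℕ) (y : Fin n → D) (x : D) : ℝ := freq n y x / n

lemma seqProb_empirical_pos {n : ℕ} (y : Fin n → D) : 0 < seqProb n (empirical n y) y :=
  prod_pos fun i _ => div_pos (Nat.cast_pos.2 (Nat.pos_of_ne_zero
    (freq_ne_zero_iff.2 (mem_image_of_mem y (mem_univ i))))) (Nat.cast_pos.2 i.pos)

end

section

variable [Fintype D]

lemma IsDist.sum_pos {p : D → ℝ} (hp : IsDist p) {T : Finset D} (hT : T ⊆ suppF p)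
    (hne : T.Nonempty) : 0 < ∑ x ∈ T, p x :=
  Finset.sum_pos (fun x hx => (hp.1 x).lt_of_ne' (mem_filter.1 (hT hx)).2) hne

namespace Constr

variable {k : ℕ} {p : D → ℝ}

lemma card_div_le_sum (hc : Constr k p) {T : Finset D} (hT : T ⊆ suppF p) :
    (T.card : ℝ) / k ≤ ∑ x ∈ T, p x := by
  have h := card_nsmul_le_sum T p (1 / k) fun x hx => hc.2 x (mem_filter.1 (hT hx)).2
  rwa [nsmul_eq_mul, mul_one_div] at h

lemma sum_suppF (hc : Constr k p) : ∑ x ∈ suppF p, p x = 1 :=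
  (sum_filter_ne_zero univ).trans hc.1.2

lemma card_suppF_le (hc : Constr k p) (hk : 0 < k) : (suppF p).card ≤ k := by
  have h := hc.card_div_le_sum subset_rfl
  rw [hc.sum_suppF, div_le_one (by positivity)] at h
  exact_mod_cast h

lemma sum_le_one_sub (hc : Constr k p) {T : Finset D} (hT : T ⊆ suppF p) :
    ∑ x ∈ T, p x ≤ 1 - (((suppF p).card - T.card : ℕ) : ℝ) / k := by
  have h := hc.card_div_le_sum (sdiff_subset (s := suppF p) (t := T))
  rw [card_sdiff_of_subset hT] at h
  linarith [sum_sdiff hT (f := p), hc.sum_suppF]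

end Constr

variable [DecidableEq D]

lemma Constr.condDist {k : ℕ} {p : D → ℝ} (hc : Constr k p) {T : Finset D}
    (hT : T ⊆ suppF p) (hne : T.Nonempty) : Constr k (condDist p T) := by
  have ht : 0 < ∑ y ∈ T, p y := hc.1.sum_pos hT hne
  have ht1 : ∑ y ∈ T, p y ≤ 1 :=
    hc.1.2 ▸ sum_le_sum_of_subset_of_nonneg (subset_univ T) fun x _ _ => hc.1.1 x
  refine ⟨⟨fun x => ?_, ?_⟩, fun x hx => ?_⟩
  · unfold PML.condDist
    split_ifs
    exacts [div_nonneg (hc.1.1 x) ht.le, le_rfl]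
  · simp only [PML.condDist]
    rw [sum_ite_mem, univ_inter, ← sum_div, div_self ht.ne']
  · unfold PML.condDist at hx ⊢
    split_ifs at hx ⊢ with hxT
    · exact (hc.2 x (mem_filter.1 (hT hxT)).2).trans
        (le_div_self (hc.1.1 x) ht ht1)
    · exact absurd rfl hx

def HasProfile (n : ℕ) (z : Fin n → D) (φ : ℕ → ℕ) : Prop :=
  ∀ j, 1 ≤ j → profS n univ z j = φ j

lemma profProb_univ_eq (n : ℕ) (p : D → ℝ) (φ : ℕ → ℕ) :
    profProb n p univ φ = ∑ z, if HasProfile n z φ then seqProb n p z else 0 :=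
  rfl

lemma image_subset_suppF_of_seqProb_ne_zero {n : ℕ} {p : D → ℝ} {z : Fin n → D}
    (h : seqProb n p z ≠ 0) : univ.image z ⊆ suppF p := by
  intro x hx
  obtain ⟨i, -, rfl⟩ := mem_image.1 hx
  simpa [suppF] using fun h0 => h (prod_eq_zero (mem_univ i) h0)

lemma seqProb_le_profProb {n : ℕ} {p : D → ℝ} {φ : ℕ → ℕ} {z : Fin n → D}
    (hp : ∀ x, 0 ≤ p x) (hz : HasProfile n z φ) : seqProb n p z ≤ profProb n p univ φ := by
  rw [profProb_univ_eq]
  refine (if_pos hz).symm.trans_le (single_le_sum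
    (f := fun z => if HasProfile n z φ then seqProb n p z else 0) (fun z _ => ?_) (mem_univ z))
  split_ifs
  exacts [seqProb_nonneg hp z, le_rfl]

lemma card_image_eq_distinct {n : ℕ} {φ : ℕ → ℕ} {z : Fin n → D} (hz : HasProfile n z φ) :
    (univ.image z).card = Distinct n φ := by
  have hfreq : ∀ x ∈ univ.image z, freq n z x ∈ Icc 1 n := fun x hx =>
    mem_Icc.2 ⟨Nat.one_le_iff_ne_zero.2 (freq_ne_zero_iff.2 hx),
      (card_filter_le _ _).trans_eq (card_fin n)⟩
  rw [card_eq_sum_card_fiberwise hfreq, Distinct]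
  refine sum_congr rfl fun j hj => ?_
  have hj1 : 1 ≤ j := (mem_Icc.1 hj).1
  rw [← hz j hj1, profS]
  congr 1
  ext x
  simp only [mem_filter, mem_univ, true_and, ← freq_ne_zero_iff]
  exact ⟨And.right, fun h => ⟨by omega, h⟩⟩

lemma distinct_le_card_suppF {n : ℕ} {p : D → ℝ} {φ : ℕ → ℕ}
    (h : profProb n p univ φ ≠ 0) : Distinct n φ ≤ (suppF p).card := by
  rw [profProb_univ_eq] at h
  obtain ⟨z, -, hz⟩ := exists_ne_zero_of_sum_ne_zero h
  have hφ : HasProfile n z φ := by by_contra h'; exact hz (if_neg h')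
  rw [if_pos hφ] at hz
  exact card_image_eq_distinct hφ ▸ card_le_card (image_subset_suppF_of_seqProb_ne_zero hz)

lemma isDist_empirical {n : ℕ} (hn : 0 < n) (y : Fin n → D) : IsDist (empirical n y) := by
  refine ⟨fun x => div_nonneg (Nat.cast_nonneg _) (Nat.cast_nonneg _), ?_⟩
  have hsum : ∑ x, freq n y x = n := by
    simpa [freq] using (card_eq_sum_card_fiberwise (f := y) (t := univ)
      (fun i _ => mem_univ (y i)) (s := univ)).symm
  simp only [empirical]
  rw [← sum_div, ← Nat.cast_sum, hsum, div_self (by positivity)]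

noncomputable def profProbOn (n : ℕ) (p : D → ℝ) (φ : ℕ → ℕ) (T : Finset D) : ℝ :=
  ∑ z, if HasProfile n z φ ∧ univ.image z = T then seqProb n p z else 0

lemma profProbOn_le_profProb {n : ℕ} {p : D → ℝ} (hp : ∀ x, 0 ≤ p x) (φ : ℕ → ℕ)
    (T : Finset D) : profProbOn n p φ T ≤ profProb n p univ φ := by
  rw [profProbOn, profProb_univ_eq]
  refine sum_le_sum fun z _ => ?_
  split_ifs with h h'
  · exact le_rfl
  · exact absurd h.1 h'
  · exact seqProb_nonneg hp z
  · exact le_rfl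

lemma profProbOn_eq_pow_mul (n : ℕ) {p : D → ℝ} (φ : ℕ → ℕ) {T : Finset D}
    (ht : ∑ x ∈ T, p x ≠ 0) :
    profProbOn n p φ T = (∑ x ∈ T, p x) ^ n * profProbOn n (condDist p T) φ T := by
  rw [profProbOn, profProbOn, mul_sum]
  refine sum_congr rfl fun z _ => ?_
  split_ifs with h
  · exact seqProb_eq_pow_mul_condDist h.2.le ht
  · rw [mul_zero]

lemma profProb_eq_sum_profProbOn (n : ℕ) (p : D → ℝ) (φ : ℕ → ℕ) :
    profProb n p univ φ =
      ∑ T ∈ powersetCard (Distinct n φ) (suppF p), profProbOn n p φ T := by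
  simp only [profProbOn, profProb_univ_eq]
  rw [sum_comm]
  refine sum_congr rfl fun z _ => ?_
  by_cases hz : HasProfile n z φ
  · simp only [hz, true_and, if_true, sum_ite_eq, mem_powersetCard, card_image_eq_distinct hz,
      and_true]
    split_ifs with hsub
    · rfl
    · by_contra h
      exact hsub (image_subset_suppF_of_seqProb_ne_zero h)
  · simp [hz]

lemma profProb_le_choose_mul_self {k n : ℕ} {φ : ℕ → ℕ} {p : D → ℝ} (hc : Constr k p)
    (hmax : ∀ q : D → ℝ, Constr k q → profProb n q univ φ ≤ profProb n p univ φ)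
    (hd : 1 ≤ Distinct n φ) :
    profProb n p univ φ ≤ ((suppF p).card.choose (Distinct n φ) *
      (1 - (((suppF p).card - Distinct n φ : ℕ) : ℝ) / k) ^ n) * profProb n p univ φ := by
  have hP : 0 ≤ profProb n p univ φ := sum_nonneg fun z _ => by
    split_ifs
    exacts [seqProb_nonneg hc.1.1 z, le_rfl]
  calc profProb n p univ φ
      = ∑ T ∈ powersetCard (Distinct n φ) (suppF p), profProbOn n p φ T :=
        profProb_eq_sum_profProbOn n p φ
    _ ≤ ∑ T ∈ powersetCard (Distinct n φ) (suppF p),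
          (1 - (((suppF p).card - Distinct n φ : ℕ) : ℝ) / k) ^ n * profProb n p univ φ :=
        sum_le_sum fun T hT => ?_
    _ = _ := by rw [sum_const, card_powersetCard, nsmul_eq_mul, mul_assoc]
  obtain ⟨hTS, hTd⟩ := mem_powersetCard.1 hT
  have hne : T.Nonempty := card_pos.1 (hTd ▸ hd)
  have ht : 0 < ∑ x ∈ T, p x := hc.1.sum_pos hTS hne
  have hcond := hc.condDist hTS hne
  calc profProbOn n p φ T = (∑ x ∈ T, p x) ^ n * profProbOn n (condDist p T) φ T :=
        profProbOn_eq_pow_mul n φ ht.ne'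
    _ ≤ (∑ x ∈ T, p x) ^ n * profProb n p univ φ :=
        mul_le_mul_of_nonneg_left ((profProbOn_le_profProb hcond.1.1 φ T).trans
          (hmax _ hcond)) (pow_nonneg ht.le n)
    _ ≤ _ := mul_le_mul_of_nonneg_right
        (pow_le_pow_left₀ ht.le (hTd ▸ hc.sum_le_one_sub hTS) n) hP

/-- For a profile `φ` of length `n ≥ 2k log k`, any PML distribution `p_φ`
constrained to have nonzero probabilities at least `1/k` satisfies
`S(p_φ) = Distinct(φ)`, provided the empirical distribution of some sequence
generating `φ` also satisfies the constraint. -/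
theorem pml_support_eq_distinct (k n : ℕ) (hk : 2 ≤ k)
    (hn : 2 * (k : ℝ) * Real.log k ≤ n)
    (φ : ℕ → ℕ) (pφ : D → ℝ) (hc : Constr k pφ)
    (hmax : ∀ q : D → ℝ, Constr k q →
      profProb n q Finset.univ φ ≤ profProb n pφ Finset.univ φ)
    (y : Fin n → D) (hy : ∀ j, 1 ≤ j → profS n Finset.univ y j = φ j)
    (hemp : ∀ x, freq n y x ≠ 0 → 1 / (k : ℝ) ≤ (freq n y x : ℝ) / n) :
    (suppF pφ).card = Distinct n φ := by
  have hn0 : 0 < n := by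
    have : (1 : ℝ) < k := by exact_mod_cast hk
    exact_mod_cast (mul_pos (by positivity) (Real.log_pos this)).trans_le hn
  have hq : Constr k (empirical n y) :=
    ⟨isDist_empirical hn0 y, fun x hx => hemp x fun h => hx (by simp [empirical, h])⟩
  have hP : 0 < profProb n pφ univ φ := (seqProb_empirical_pos y).trans_le
    ((seqProb_le_profProb hq.1.1 hy).trans (hmax _ hq))
  have hd : 1 ≤ Distinct n φ :=
    card_image_eq_distinct hy ▸ card_pos.2 (univ_nonempty_iff.2 ⟨⟨0, hn0⟩⟩ |>.image y)
  refine le_antisymm (not_lt.1 fun hlt => ?_) (distinct_le_card_suppF hP.ne')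
  have hfactor := choose_mul_one_sub_div_pow_lt_one hk hn (hc.card_suppF_le (by omega)) hlt
  nlinarith [profProb_le_choose_mul_self hc hmax hd]

end

end PML
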